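/- Let h : ℝ² → ℝ be of class C² with h(x+1, x̄+1) = h(x, x̄) and h₁₂(x, x̄) < 0 for all (x, x̄) ∈ ℝ². Let φ : ℝ → ℝ be an increasing bi-Lipschitz homeomorphism with φ(x+1) = φ(x) + 1 satisfying h₂(φ⁻¹(x), x) + h₁(x, φ(x)) = 0 for all x ∈ ℝ. Define a(x) = h₂₂(φ⁻¹(x), x) + h₁₁(x, φ(x)) and b(x) = −h₁₂(φ⁻¹(x), x). Then for every x ∈ ℝ, a(x) ≥ b(φ(x))·(essinf φ') + b(x)/(esssup φ') > 0. -/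

import Mathlib

/-!
Differentiating the Euler–Lagrange relation `h₂(ψ x, x) + h₁(x, φ x) = 0` along `x`, at a point
where `φ` is differentiable at `x` and at `ψ x`, and using the symmetry of the Hessian of `h`,
gives `a(x) = b(φ x) φ'(x) + b(x) / φ'(ψ x)`. By Rademacher's theorem and because Lipschitz maps
send null sets to null sets, this holds for almost every `x` with
`essinf φ' ≤ φ'(x)` and `φ'(ψ x) ≤ esssup φ'`; as `b = -h₁₂ > 0`, the inequality follows almost
everywhere, hence everywhere since both sides are continuous. Positivity of the bound comes from
`b > 0` and `essinf φ' ≥ 1/K`.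
-/

open MeasureTheory

/-- Partial derivative of `h` with respect to its first argument. -/
noncomputable def h1 (h : ℝ → ℝ → ℝ) (x y : ℝ) : ℝ := deriv (fun u => h u y) x

/-- Partial derivative of `h` with respect to its second argument. -/
noncomputable def h2 (h : ℝ → ℝ → ℝ) (x y : ℝ) : ℝ := deriv (fun v => h x v) y

/-- Second partial derivative of `h` with respect to its first argument, twice. -/
noncomputable def h11 (h : ℝ → ℝ → ℝ) (x y : ℝ) : ℝ := deriv (fun u => h1 h u y) x

/-- Mixed second partial derivative of `h`. -/
noncomputable def h12 (h : ℝ → ℝ → ℝ) (x y : ℝ) : ℝ := deriv (fun v => h1 h x v) y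

/-- Second partial derivative of `h` with respect to its second argument, twice. -/
noncomputable def h22 (h : ℝ → ℝ → ℝ) (x y : ℝ) : ℝ := deriv (fun v => h2 h x v) y

open Function Filter Set
open scoped NNReal

section BiLipschitz

variable {φ ψ : ℝ → ℝ} {K : ℝ≥0}

theorem AntilipschitzWith.inv_le_abs_deriv (hφ : AntilipschitzWith K φ) {x : ℝ}
    (hd : DifferentiableAt ℝ φ x) : (K : ℝ)⁻¹ ≤ |deriv φ x| := by
  have hslope : ∀ z ∈ ({x}ᶜ : Set ℝ), (K : ℝ)⁻¹ ≤ |slope φ x z| := by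
    intro z hz
    have hzx : 0 < |z - x| := abs_pos.2 (sub_ne_zero.2 hz)
    have hle : |z - x| ≤ K * |φ z - φ x| := by
      simpa only [Real.dist_eq] using hφ.le_mul_dist z x
    rw [slope_def_field, abs_div, le_div_iff₀ hzx]
    rcases K.coe_nonneg.eq_or_lt with hK | hK
    · simp [← hK]
    · calc (K : ℝ)⁻¹ * |z - x| ≤ (K : ℝ)⁻¹ * (K * |φ z - φ x|) := by gcongr
        _ = |φ z - φ x| := by field_simp
  exact ge_of_tendsto (hasDerivAt_iff_tendsto_slope.1 hd.hasDerivAt).abs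
    (eventually_mem_nhdsWithin.mono hslope)

theorem ae_deriv_mem_Icc_of_biLipschitz (hmono : Monotone φ) (hlip : LipschitzWith K φ)
    (halip : AntilipschitzWith K φ) : ∀ᵐ x, deriv φ x ∈ Icc (K : ℝ)⁻¹ K := by
  filter_upwards [hlip.ae_differentiableAt] with x hx
  refine ⟨?_, (le_abs_self _).trans ?_⟩
  · simpa [abs_of_nonneg hmono.deriv_nonneg] using halip.inv_le_abs_deriv hx
  · simpa using norm_deriv_le_of_lipschitz (x₀ := x) hlip

theorem LipschitzWith.volume_image_null (hφ : LipschitzWith K φ) {s : Set ℝ}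
    (hs : volume s = 0) : volume (φ '' s) = 0 := by
  have := hφ.hausdorffMeasure_image_le zero_le_one s
  rw [hausdorffMeasure_real, hs, mul_zero] at this
  exact le_zero_iff.1 this

theorem LipschitzWith.ae_comp_of_rightInverse (hφ : LipschitzWith K φ)
    (hψ : RightInverse ψ φ) {p : ℝ → Prop} (hp : ∀ᵐ y, p y) : ∀ᵐ x, p (ψ x) :=
  ae_iff.2 <| measure_mono_null (fun x (hx : ¬p (ψ x)) =>
    show x ∈ φ '' {y | ¬p y} from ⟨ψ x, hx, hψ x⟩)
    (hφ.volume_image_null (ae_iff.1 hp))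

end BiLipschitz

section EssentialBounds

variable {α : Type*} [MeasurableSpace α] {μ : Measure α} {f : α → ℝ} {c C : ℝ}

theorem le_essInf_of_ae_mem_Icc [(ae μ).NeBot] (hf : ∀ᵐ x ∂μ, f x ∈ Icc c C) :
    c ≤ essInf f μ :=
  le_essInf_of_ae_le c (hf.mono fun _ hx => hx.1)
    (isBoundedUnder_of_eventually_le (hf.mono fun _ hx => hx.2)).isCoboundedUnder_ge

theorem ae_mem_Icc_essInf_essSup (hf : ∀ᵐ x ∂μ, f x ∈ Icc c C) :
    ∀ᵐ x ∂μ, f x ∈ Icc (essInf f μ) (essSup f μ) := by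
  filter_upwards [ae_essInf_le (isBoundedUnder_of_eventually_ge (hf.mono fun _ hx => hx.1)),
    ae_le_essSup (isBoundedUnder_of_eventually_le (hf.mono fun _ hx => hx.2))]
    with x hle hge using ⟨hle, hge⟩

end EssentialBounds

theorem Continuous.le_of_ae_le {X : Type*} [TopologicalSpace X] [MeasurableSpace X]
    {μ : Measure X} [μ.IsOpenPosMeasure] {f g : X → ℝ} (hf : Continuous f)
    (hg : Continuous g) (h : ∀ᵐ x ∂μ, f x ≤ g x) : f ≤ g := fun x =>
  (isClosed_le hf hg).closure_subset_iff.2 subset_rfl <|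
    (Measure.dense_of_ae h).closure_eq ▸ mem_univ x

section PartialDerivatives

variable {E G : Type*} [NormedAddCommGroup E] [NormedSpace ℝ E] [NormedAddCommGroup G]
  [NormedSpace ℝ G]

theorem HasDerivAt.fderiv_apply_comp {F : E → G} {γ : ℝ → E} {v : E} {t : ℝ}
    (hγ : HasDerivAt γ v t) (hF : DifferentiableAt ℝ (fderiv ℝ F) (γ t)) (w : E) :
    HasDerivAt (fun s => fderiv ℝ F (γ s) w) (fderiv ℝ (fderiv ℝ F) (γ t) v w) t :=
  (ContinuousLinearMap.apply ℝ G w).hasFDerivAt.comp_hasDerivAt t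
    (hF.hasFDerivAt.comp_hasDerivAt t hγ)

theorem hasDerivAt_prodMk_const (x y : ℝ) : HasDerivAt (fun u => (u, y)) ((1 : ℝ), (0 : ℝ)) x :=
  (hasDerivAt_id x).prodMk (hasDerivAt_const x y)

theorem hasDerivAt_const_prodMk (x y : ℝ) : HasDerivAt (fun v => (x, v)) ((0 : ℝ), (1 : ℝ)) y :=
  (hasDerivAt_const y x).prodMk (hasDerivAt_id y)

variable {h : ℝ → ℝ → ℝ}

theorem h1_eq_fderiv (hh : Differentiable ℝ (uncurry h)) :
    h1 h = fun x y => fderiv ℝ (uncurry h) (x, y) (1, 0) :=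
  funext₂ fun x y => ((hh _).hasFDerivAt.comp_hasDerivAt x (hasDerivAt_prodMk_const x y)).deriv

theorem h2_eq_fderiv (hh : Differentiable ℝ (uncurry h)) :
    h2 h = fun x y => fderiv ℝ (uncurry h) (x, y) (0, 1) :=
  funext₂ fun x y => ((hh _).hasFDerivAt.comp_hasDerivAt y (hasDerivAt_const_prodMk x y)).deriv

theorem ContDiff.differentiable_fderiv {f : E → G} {n : WithTop ℕ∞} (hf : ContDiff ℝ n f)
    (hn : 2 ≤ n) : Differentiable ℝ (fderiv ℝ f) :=
  (hf.fderiv_right (m := 1) hn).differentiable one_ne_zero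

theorem h11_eq_fderiv_fderiv (hh : ContDiff ℝ 2 (uncurry h)) (x y : ℝ) :
    h11 h x y = fderiv ℝ (fderiv ℝ (uncurry h)) (x, y) (1, 0) (1, 0) := by
  rw [h11, h1_eq_fderiv (hh.differentiable two_ne_zero)]
  exact ((hasDerivAt_prodMk_const x y).fderiv_apply_comp
    (hh.differentiable_fderiv le_rfl _) _).deriv

theorem h12_eq_fderiv_fderiv (hh : ContDiff ℝ 2 (uncurry h)) (x y : ℝ) :
    h12 h x y = fderiv ℝ (fderiv ℝ (uncurry h)) (x, y) (0, 1) (1, 0) := by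
  rw [h12, h1_eq_fderiv (hh.differentiable two_ne_zero)]
  exact ((hasDerivAt_const_prodMk x y).fderiv_apply_comp
    (hh.differentiable_fderiv le_rfl _) _).deriv

theorem h22_eq_fderiv_fderiv (hh : ContDiff ℝ 2 (uncurry h)) (x y : ℝ) :
    h22 h x y = fderiv ℝ (fderiv ℝ (uncurry h)) (x, y) (0, 1) (0, 1) := by
  rw [h22, h2_eq_fderiv (hh.differentiable two_ne_zero)]
  exact ((hasDerivAt_const_prodMk x y).fderiv_apply_comp
    (hh.differentiable_fderiv le_rfl _) _).deriv

theorem continuous_fderiv_fderiv_apply (hh : ContDiff ℝ 2 (uncurry h)) (v w : ℝ × ℝ) :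
    Continuous fun p => fderiv ℝ (fderiv ℝ (uncurry h)) p v w := by
  have := (hh.fderiv_right (m := 1) le_rfl).continuous_fderiv one_ne_zero
  fun_prop

theorem continuous_h11 (hh : ContDiff ℝ 2 (uncurry h)) : Continuous (uncurry (h11 h)) :=
  (continuous_fderiv_fderiv_apply hh _ _).congr fun p => (h11_eq_fderiv_fderiv hh p.1 p.2).symm

theorem continuous_h12 (hh : ContDiff ℝ 2 (uncurry h)) : Continuous (uncurry (h12 h)) :=
  (continuous_fderiv_fderiv_apply hh _ _).congr fun p => (h12_eq_fderiv_fderiv hh p.1 p.2).symm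

theorem continuous_h22 (hh : ContDiff ℝ 2 (uncurry h)) : Continuous (uncurry (h22 h)) :=
  (continuous_fderiv_fderiv_apply hh _ _).congr fun p => (h22_eq_fderiv_fderiv hh p.1 p.2).symm

theorem h22_add_h11_eq_of_hasDerivAt (hh : ContDiff ℝ 2 (uncurry h)) {φ ψ : ℝ → ℝ}
    (hEL : ∀ x, h2 h (ψ x) x + h1 h x (φ x) = 0) {x p q : ℝ} (hφ : HasDerivAt φ p x)
    (hψ : HasDerivAt ψ q x) :
    h22 h (ψ x) x + h11 h x (φ x) = -(q * h12 h (ψ x) x + p * h12 h x (φ x)) := by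
  have hD2 := hh.differentiable_fderiv le_rfl
  have hderiv : HasDerivAt (fun z => h2 h (ψ z) z + h1 h z (φ z))
      (fderiv ℝ (fderiv ℝ (uncurry h)) (ψ x, x) (q, 1) (0, 1) +
        fderiv ℝ (fderiv ℝ (uncurry h)) (x, φ x) (1, p) (1, 0)) x := by
    rw [h2_eq_fderiv (hh.differentiable two_ne_zero),
      h1_eq_fderiv (hh.differentiable two_ne_zero)]
    exact ((hψ.prodMk (hasDerivAt_id x)).fderiv_apply_comp (hD2 _) _).add
      (((hasDerivAt_id x).prodMk hφ).fderiv_apply_comp (hD2 _) _)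
  have hzero : fderiv ℝ (fderiv ℝ (uncurry h)) (ψ x, x) (q, 1) (0, 1) +
      fderiv ℝ (fderiv ℝ (uncurry h)) (x, φ x) (1, p) (1, 0) = 0 :=
    hderiv.unique (by simpa only [hEL] using hasDerivAt_const x (0 : ℝ))
  have hsymm := (hh.contDiffAt (x := (ψ x, x))).isSymmSndFDerivAt (by simp)
  have e1 : ((q, 1) : ℝ × ℝ) = q • ((1 : ℝ), (0 : ℝ)) + ((0 : ℝ), (1 : ℝ)) := by simp
  have e2 : ((1, p) : ℝ × ℝ) = ((1 : ℝ), (0 : ℝ)) + p • ((0 : ℝ), (1 : ℝ)) := by simp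
  rw [e1, e2] at hzero
  simp only [map_add, map_smul, add_apply, smul_apply, smul_eq_mul, hsymm (1, 0) (0, 1)] at hzero
  rw [h11_eq_fderiv_fderiv hh, h12_eq_fderiv_fderiv hh, h12_eq_fderiv_fderiv hh,
    h22_eq_fderiv_fderiv hh]
  linarith

theorem h22_add_h11_eq_of_rightInverse (hh : ContDiff ℝ 2 (uncurry h)) {φ ψ : ℝ → ℝ}
    (hEL : ∀ x, h2 h (ψ x) x + h1 h x (φ x) = 0) (hlinv : LeftInverse ψ φ)
    (hrinv : RightInverse ψ φ) (hψ : Continuous ψ) {x : ℝ} (hφx : DifferentiableAt ℝ φ x)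
    (hφψx : DifferentiableAt ℝ φ (ψ x)) (hc : deriv φ (ψ x) ≠ 0) :
    h22 h (ψ x) x + h11 h x (φ x) =
      -h12 h (ψ (φ x)) (φ x) * deriv φ x + -h12 h (ψ x) x / deriv φ (ψ x) := by
  have hψx : HasDerivAt ψ (deriv φ (ψ x))⁻¹ x :=
    hφψx.hasDerivAt.of_local_left_inverse hψ.continuousAt hc (Eventually.of_forall hrinv)
  rw [h22_add_h11_eq_of_hasDerivAt hh hEL hφx.hasDerivAt hψx, hlinv x]
  ring

end PartialDerivatives

theorem second_variation_lower_bound_general (h : ℝ → ℝ → ℝ)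
    (hC2 : ContDiff ℝ 2 (fun p : ℝ × ℝ => h p.1 p.2))
    (htwist : ∀ x y, h12 h x y < 0)
    (φ ψ : ℝ → ℝ) (hmono : StrictMono φ) (K : NNReal)
    (hlip : LipschitzWith K φ) (halip : AntilipschitzWith K φ)
    (hlinv : Function.LeftInverse ψ φ) (hrinv : Function.RightInverse ψ φ)
    (hEL : ∀ x, h2 h (ψ x) x + h1 h x (φ x) = 0)
    (a b : ℝ → ℝ)
    (ha : ∀ x, a x = h22 h (ψ x) x + h11 h x (φ x))
    (hb : ∀ x, b x = -h12 h (ψ x) x) :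
    ∀ x : ℝ,
      0 < b (φ x) * essInf (deriv φ) volume + b x / essSup (deriv φ) volume ∧
      b (φ x) * essInf (deriv φ) volume + b x / essSup (deriv φ) volume ≤ a x := by
  set m := essInf (deriv φ) volume
  set M := essSup (deriv φ) volume
  have hderivK := ae_deriv_mem_Icc_of_biLipschitz hmono.monotone hlip halip
  have hderiv : ∀ᵐ x, deriv φ x ∈ Icc m M := ae_mem_Icc_essInf_essSup hderivK
  have hm : 0 < m :=
    (inv_pos.2 (NNReal.coe_pos.2 halip.pos)).trans_le (le_essInf_of_ae_mem_Icc hderivK)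
  obtain ⟨x₀, hmx₀, hx₀M⟩ := hderiv.exists
  have hM : 0 < M := hm.trans_le (hmx₀.trans hx₀M)
  have hbpos : ∀ z, 0 < b z := fun z => by rw [hb]; linarith [htwist (ψ z) z]
  have hψc : Continuous ψ := (halip.to_rightInverse hrinv).continuous
  have hae : ∀ᵐ x, b (φ x) * m + b x / M ≤ a x := by
    have hgood := hderiv.and hlip.ae_differentiableAt
    filter_upwards [hgood, hlip.ae_comp_of_rightInverse hrinv hgood]
      with x ⟨⟨hmx, _⟩, hφx⟩ ⟨⟨hmψx, hψxM⟩, hφψx⟩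
    have hc : 0 < deriv φ (ψ x) := hm.trans_le hmψx
    rw [ha, h22_add_h11_eq_of_rightInverse hC2 hEL hlinv hrinv hψc hφx hφψx hc.ne', ← hb, ← hb]
    exact add_le_add (mul_le_mul_of_nonneg_left hmx (hbpos _).le)
      (div_le_div_of_nonneg_left (hbpos x).le hc hψxM)
  have hbc : Continuous b :=
    funext hb ▸ ((continuous_h12 hC2).comp (hψc.prodMk continuous_id)).neg
  have hac : Continuous a :=
    funext ha ▸ ((continuous_h22 hC2).comp (hψc.prodMk continuous_id)).add
      ((continuous_h11 hC2).comp (continuous_id.prodMk hlip.continuous))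
  have hlower : Continuous fun x => b (φ x) * m + b x / M :=
    ((hbc.comp hlip.continuous).mul continuous_const).add (hbc.div_const M)
  refine fun x => ⟨?_, hlower.le_of_ae_le hac hae x⟩
  have := hbpos x
  have := hbpos (φ x)
  positivity

/-- on an invariant curve, for every `x`,
`a(x) ≥ b(φ(x))·(essinf φ') + b(x)/(esssup φ') > 0`. -/
theorem second_variation_lower_bound (h : ℝ → ℝ → ℝ)
    (hC2 : ContDiff ℝ 2 (fun p : ℝ × ℝ => h p.1 p.2))
    (hper : ∀ x y, h (x + 1) (y + 1) = h x y)
    (htwist : ∀ x y, h12 h x y < 0)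
    (φ ψ : ℝ → ℝ) (hmono : StrictMono φ) (K : NNReal)
    (hlip : LipschitzWith K φ) (halip : AntilipschitzWith K φ)
    (hlinv : Function.LeftInverse ψ φ) (hrinv : Function.RightInverse ψ φ)
    (hcomm : ∀ x, φ (x + 1) = φ x + 1)
    (hEL : ∀ x, h2 h (ψ x) x + h1 h x (φ x) = 0)
    (a b : ℝ → ℝ)
    (ha : ∀ x, a x = h22 h (ψ x) x + h11 h x (φ x))
    (hb : ∀ x, b x = -h12 h (ψ x) x) :
    ∀ x : ℝ,
      0 < b (φ x) * essInf (deriv φ) volume + b x / essSup (deriv φ) volume ∧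
      b (φ x) * essInf (deriv φ) volume + b x / essSup (deriv φ) volume ≤ a x :=
  second_variation_lower_bound_general h hC2 htwist φ ψ hmono K hlip halip hlinv hrinv hEL a b ha hb
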